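/- Let I ⊆ ℝ be an open interval and let α : ℝ → ℝ be twice differentiable on I with α(h) > 0 for all h ∈ I. If α satisfies α(h) · α''(h) = -2 · (α'(h))² for all h ∈ I, then there exist real numbers a and b such that α(h)³ = a·h + b for all h ∈ I. -/

import Mathlib

/-- On a convex open set, a function whose derivative vanishes is constant. -/
lemma const_of_hasDerivAt_zero {s : Set ℝ} (hs : Convex ℝ s) (ho : IsOpen s)
    {f : ℝ → ℝ} (hf : ∀ x ∈ s, HasDerivAt f 0 x) :
    ∀ x ∈ s, ∀ y ∈ s, f x = f y := by
  intro x hx y hy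
  refine hs.is_const_of_fderivWithin_eq_zero (fun z hz => ((hf z hz).differentiableAt).differentiableWithinAt) ?_ hx hy
  intro z hz
  rw [fderivWithin_of_isOpen ho hz]
  exact ((hf z hz).hasFDerivAt).fderiv.trans (by ext t; simp)

/-- The positive solutions on an open interval of the ODE
`α * α'' = -2 * (α')²` satisfy `α³ = a*h + b` for some constants `a, b`. -/
theorem schwarzschild_warping_ode_solution (c d : ℝ)
    (α : ℝ → ℝ)
    (hdiff : ∀ h ∈ Set.Ioo c d, DifferentiableAt ℝ α h)
    (hdiff' : ∀ h ∈ Set.Ioo c d, DifferentiableAt ℝ (deriv α) h)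
    (hpos : ∀ h ∈ Set.Ioo c d, 0 < α h)
    (hode : ∀ h ∈ Set.Ioo c d, α h * deriv (deriv α) h = -2 * (deriv α h) ^ 2) :
    ∃ a b : ℝ, ∀ h ∈ Set.Ioo c d, (α h) ^ 3 = a * h + b := by
  rcases Set.eq_empty_or_nonempty (Set.Ioo c d) with he | ⟨x0, hx0⟩
  · exact ⟨0, 0, fun h hh => absurd hh (by rw [he]; exact Set.notMem_empty h)⟩
  set φ : ℝ → ℝ := fun h => 3 * (α h) ^ 2 * deriv α h with hφ
  have hconv : Convex ℝ (Set.Ioo c d) := convex_Ioo c d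
  have hopen : IsOpen (Set.Ioo c d) := isOpen_Ioo
  -- φ has derivative 0 on the interval
  have hφ0 : ∀ h ∈ Set.Ioo c d, HasDerivAt φ 0 h := by
    intro h hh
    have h1 : HasDerivAt α (deriv α h) h := (hdiff h hh).hasDerivAt
    have h2 : HasDerivAt (deriv α) (deriv (deriv α) h) h := (hdiff' h hh).hasDerivAt
    have : HasDerivAt φ
        (3 * (2 * α h * deriv α h) * deriv α h + 3 * (α h) ^ 2 * deriv (deriv α) h) h := by
      have := ((h1.fun_pow 2).const_mul 3).mul h2
      exact this.congr_deriv (by push_cast; ring)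
    convert this using 1
    have h3 := hode h hh
    linear_combination -3 * α h * h3
  have hφconst : ∀ h ∈ Set.Ioo c d, φ h = φ x0 :=
    fun h hh => const_of_hasDerivAt_zero hconv hopen hφ0 h hh x0 hx0
  set a := φ x0 with ha
  -- α³ - a*h has derivative 0
  set ψ : ℝ → ℝ := fun h => (α h) ^ 3 - a * h with hψ
  have hψ0 : ∀ h ∈ Set.Ioo c d, HasDerivAt ψ 0 h := by
    intro h hh
    have h1 : HasDerivAt α (deriv α h) h := (hdiff h hh).hasDerivAt
    have hc : HasDerivAt (fun h : ℝ => (α h) ^ 3) (3 * (α h) ^ 2 * deriv α h) h := by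
      have := h1.fun_pow 3
      exact this.congr_deriv (by push_cast; ring)
    have := hc.sub ((hasDerivAt_id h).const_mul a)
    have heq : 3 * (α h) ^ 2 * deriv α h - a * 1 = 0 := by
      have := hφconst h hh
      simp only [hφ] at this
      linarith
    rw [heq] at this
    exact this
  refine ⟨a, ψ x0, fun h hh => ?_⟩
  have := const_of_hasDerivAt_zero hconv hopen hψ0 h hh x0 hx0
  simp only [hψ] at this ⊢
  linarith
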